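/- arXiv:2109.15073 — 3 statements merged into one kernel-verified Lean document; each statement's English description precedes it below -/
import Mathlib

section
/- Let Ψ : ℝ² → ℝ be defined by Ψ(x,y) = x - (1/(2π))·arcsin(sin(2πx)·(1 - e^{-y-2})). Then for every integer k and every y ≥ 0, if |x - k| ≤ 1/5 then |Ψ(x,y) - k| < e^{-y}·|x - k| (when x ≠ k; in general |Ψ(x,y) - k| ≤ e^{-y}·|x - k|). -/
noncomputable def Psi (x y : ℝ) : ℝ :=
  x - (1 / (2 * Real.pi)) * Real.arcsin (Real.sin (2 * Real.pi * x) * (1 - Real.exp (-y - 2)))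

/-!
With `s = 2π (x - k)` and `c = 1 - e^{-y-2}`, periodicity gives `2π (Ψ(x, y) - k) = s - arcsin (c sin s)`.
By concavity of `sin` on `[0, π]`, the gap `δ = s - arcsin (c sin s)` satisfies
`δ cos s ≤ sin s - c sin s = e^{-y-2} sin s ≤ e^{-y-2} s`. For `|s| ≤ 2π/5` we have `cos s ≥ 1/5`, and
`e^{-2} ≤ 3/20`, so `|δ| ≤ (3/4) e^{-y} |s|`, which is strictly less than `e^{-y} |s|` unless `s = 0`.
-/

open Real

namespace Real

lemma sub_mul_cos_le_sin_sub_sin {r s : ℝ} (hr : 0 ≤ r) (hrs : r ≤ s) (hs : s ≤ π) :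
    (s - r) * cos s ≤ sin s - sin r := by
  rcases hrs.eq_or_lt with rfl | hlt
  · simp
  have hslope := strictConcaveOn_sin_Icc.concaveOn.le_slope_of_hasDerivAt
    ⟨hr, hlt.le.trans hs⟩ ⟨hr.trans hlt.le, hs⟩ hlt (hasDerivAt_sin s)
  rw [slope_def_field, le_div_iff₀ (sub_pos.2 hlt)] at hslope
  linarith

lemma sub_arcsin_sin_mul_nonneg_and_mul_cos_le {s c : ℝ} (hs0 : 0 ≤ s) (hs : s ≤ π / 2)
    (hc0 : 0 ≤ c) (hc1 : c ≤ 1) :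
    0 ≤ s - arcsin (sin s * c) ∧ (s - arcsin (sin s * c)) * cos s ≤ (1 - c) * sin s := by
  have hsin0 : 0 ≤ sin s := sin_nonneg_of_nonneg_of_le_pi hs0 (by linarith [pi_pos])
  have hle : sin s * c ≤ sin s := mul_le_of_le_one_right hsin0 hc1
  have hr0 : 0 ≤ arcsin (sin s * c) := arcsin_nonneg.2 (mul_nonneg hsin0 hc0)
  have hrs : arcsin (sin s * c) ≤ s := by
    simpa [arcsin_sin (by linarith [pi_pos]) hs] using monotone_arcsin hle
  have hsin_arcsin : sin (arcsin (sin s * c)) = sin s * c :=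
    sin_arcsin (by linarith [mul_nonneg hsin0 hc0]) (hle.trans (sin_le_one s))
  refine ⟨sub_nonneg.2 hrs, ?_⟩
  have := sub_mul_cos_le_sin_sub_sin hr0 hrs (by linarith [pi_pos])
  rw [hsin_arcsin] at this
  linarith

lemma abs_sub_arcsin_sin_mul_mul_cos_le {s c : ℝ} (hs : |s| ≤ π / 2) (hc0 : 0 ≤ c) (hc1 : c ≤ 1) :
    |s - arcsin (sin s * c)| * cos s ≤ (1 - c) * |sin s| := by
  obtain ⟨hs_lo, hs_hi⟩ := abs_le.1 hs
  rcases le_total 0 s with h | h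
  · obtain ⟨hnonneg, hle⟩ := sub_arcsin_sin_mul_nonneg_and_mul_cos_le h hs_hi hc0 hc1
    rwa [abs_of_nonneg hnonneg,
      abs_of_nonneg (sin_nonneg_of_nonneg_of_le_pi h (by linarith [pi_pos]))]
  · obtain ⟨hnonneg, hle⟩ :=
      sub_arcsin_sin_mul_nonneg_and_mul_cos_le (neg_nonneg.2 h) (by linarith) hc0 hc1
    simp only [sin_neg, neg_mul, arcsin_neg, cos_neg] at hnonneg hle
    rw [abs_of_nonpos (by linarith),
      abs_of_nonpos (sin_nonpos_of_nonpos_of_neg_pi_le h (by linarith [pi_pos]))]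
    linarith

lemma one_fifth_le_cos_of_abs_le {s : ℝ} (hs : |s| ≤ 2 * π / 5) : 1 / 5 ≤ cos s := by
  have hsq : s ^ 2 ≤ (2 * π / 5) ^ 2 := sq_le_sq' (abs_le.1 hs).1 (abs_le.1 hs).2
  nlinarith [one_sub_sq_div_two_le_cos (x := s), pi_lt_d2, pi_pos]

lemma abs_sub_arcsin_sin_mul_le {s c : ℝ} (hs : |s| ≤ 2 * π / 5) (hc0 : 0 ≤ c) (hc1 : c ≤ 1) :
    |s - arcsin (sin s * c)| ≤ 5 * (1 - c) * |s| := by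
  have hmul := abs_sub_arcsin_sin_mul_mul_cos_le (hs.trans (by linarith [pi_pos])) hc0 hc1
  have hsin : (1 - c) * |sin s| ≤ (1 - c) * |s| :=
    mul_le_mul_of_nonneg_left abs_sin_le_abs (by linarith)
  nlinarith [one_fifth_le_cos_of_abs_le hs, abs_nonneg (s - arcsin (sin s * c))]

lemma exp_neg_two_le : exp (-2) ≤ 3 / 20 := by
  rw [exp_neg, inv_le_comm₀ (exp_pos 2) (by norm_num), show (2 : ℝ) = 1 + 1 by norm_num, exp_add]
  nlinarith [exp_one_gt_d9]

end Real

lemma Psi_add_intCast (t y : ℝ) (k : ℤ) : Psi (t + k) y = Psi t y + k := by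
  have hsin : sin (2 * π * (t + k)) = sin (2 * π * t) := by
    rw [show 2 * π * (t + k) = 2 * π * t + k * (2 * π) by ring, sin_add_int_mul_two_pi]
  simp only [Psi, hsin]
  ring

lemma abs_Psi_le {t y : ℝ} (hy : 0 ≤ y) (ht : |t| ≤ 1 / 5) :
    |Psi t y| ≤ 3 / 4 * exp (-y) * |t| := by
  have hε : exp (-y - 2) ≤ 3 / 20 * exp (-y) := by
    rw [sub_eq_add_neg, exp_add, mul_comm (3 / 20)]
    exact mul_le_mul_of_nonneg_left exp_neg_two_le (exp_pos _).le
  have hs : |2 * π * t| = 2 * π * |t| := by rw [abs_mul, abs_of_pos two_pi_pos]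
  have hgap := abs_sub_arcsin_sin_mul_le (s := 2 * π * t) (c := 1 - exp (-y - 2))
    (by rw [hs]; nlinarith [pi_pos])
    (by linarith [exp_le_one_iff.2 (show -y - 2 ≤ 0 by linarith)]) (by linarith [exp_pos (-y - 2)])
  have hPsi : Psi t y = (2 * π * t - arcsin (sin (2 * π * t) * (1 - exp (-y - 2)))) / (2 * π) := by
    rw [Psi]; field_simp
  rw [sub_sub_cancel, hs] at hgap
  rw [hPsi, abs_div, abs_of_pos two_pi_pos, div_le_iff₀ two_pi_pos]
  nlinarith [mul_le_mul_of_nonneg_right hε (mul_nonneg two_pi_pos.le (abs_nonneg t))]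

theorem stmt_0 (x y : ℝ) (k : ℤ) (hy : 0 ≤ y) (hx : |x - k| ≤ 1 / 5) :
    (x ≠ (k : ℝ) → |Psi x y - k| < Real.exp (-y) * |x - k|) ∧
    |Psi x y - k| ≤ Real.exp (-y) * |x - k| := by
  have hPsi : |Psi x y - k| ≤ 3 / 4 * exp (-y) * |x - k| := by
    rw [← sub_add_cancel x (k : ℝ), Psi_add_intCast, add_sub_cancel_right, add_sub_cancel_right]
    exact abs_Psi_le hy hx
  refine ⟨fun hne => hPsi.trans_lt ?_, hPsi.trans ?_⟩
  · have := abs_pos.2 (sub_ne_zero.2 hne)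
    nlinarith [exp_pos (-y)]
  · nlinarith [exp_pos (-y), abs_nonneg (x - k)]
end

section
/- Let b ∈ ℝ, γ > 0, t₀ < t₁, and let φ : ℝ → ℝ be continuous with φ(t) ≥ 0 for all t ≥ t₀ and ∫_{t₀}^{t₁} φ(t) dt > 0. Let c ≥ 1 / (2γ²·∫_{t₀}^{t₁} φ(t) dt). Then every solution y of the ODE y' = c·(b - y)³·φ(t) with arbitrary initial condition y(t₀) = y₀ ∈ ℝ satisfies |y(t) - b| < γ for all t ≥ t₁. -/
theorem stmt_10 (b γ t₀ t₁ c : ℝ) (hγ : 0 < γ) (ht : t₀ < t₁)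
    (φ : ℝ → ℝ) (hφc : Continuous φ) (hφ0 : ∀ t, t₀ ≤ t → 0 ≤ φ t)
    (hφint : 0 < ∫ t in t₀..t₁, φ t)
    (hc : 1 / (2 * γ ^ 2 * ∫ t in t₀..t₁, φ t) ≤ c)
    (y : ℝ → ℝ)
    (hy : ∀ t, t₀ ≤ t → HasDerivAt y (c * (b - y t) ^ 3 * φ t) t) :
    ∀ t, t₁ ≤ t → |y t - b| < γ := by
  set I := ∫ t in t₀..t₁, φ t with hI
  have hcpos : 0 < c := lt_of_lt_of_le (by positivity) hc
  set F : ℝ → ℝ := fun t => (y t - b) ^ 2 with hFdef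
  have hF : ∀ t, t₀ ≤ t →
      HasDerivAt F (-(2 * c) * (y t - b) ^ 4 * φ t) t := by
    intro t htt
    have h := (((hy t htt).sub_const b).pow 2)
    refine h.congr_deriv ?_
    ring
  -- F is antitone on [t₀, ∞)
  have hanti : AntitoneOn F (Set.Ici t₀) := by
    apply antitoneOn_of_hasDerivWithinAt_nonpos (convex_Ici t₀)
      (f' := fun t => -(2 * c) * (y t - b) ^ 4 * φ t)
    · intro x hx
      exact (hF x hx).continuousAt.continuousWithinAt
    · intro x hx
      rw [interior_Ici] at hx
      exact (hF x (le_of_lt hx)).hasDerivWithinAt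
    · intro x hx
      rw [interior_Ici] at hx
      have h1 : 0 ≤ φ x := hφ0 x (le_of_lt hx)
      have h4 : (0:ℝ) ≤ (y x - b) ^ 4 := by positivity
      nlinarith [mul_nonneg (mul_nonneg (le_of_lt hcpos) h4) h1]
  -- claim: F t₁ < γ^2
  have hkey : F t₁ < γ ^ 2 := by
    by_contra hcon
    push_neg at hcon
    have hFlb : ∀ s, s ∈ Set.Icc t₀ t₁ → γ ^ 2 ≤ F s := fun s hs =>
      le_trans hcon (hanti hs.1 (le_of_lt ht) hs.2)
    have hFne : ∀ s, s ∈ Set.Icc t₀ t₁ → y s - b ≠ 0 := by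
      intro s hs h0
      have := hFlb s hs
      rw [hFdef] at this
      simp only [h0] at this
      nlinarith
    have hG : ∀ s ∈ Set.uIcc t₀ t₁, HasDerivAt (fun t => (F t)⁻¹) (2 * c * φ s) s := by
      intro s hs
      rw [Set.uIcc_of_le (le_of_lt ht)] at hs
      have hne : F s ≠ 0 := pow_ne_zero 2 (hFne s hs)
      have h := (hF s hs.1).inv hne
      refine h.congr_deriv ?_
      have h2 : y s - b ≠ 0 := hFne s hs
      field_simp [hFdef]
      ring
    have hint : IntervalIntegrable (fun s => 2 * c * φ s) MeasureTheory.volume t₀ t₁ :=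
      (continuous_const.mul hφc).intervalIntegrable t₀ t₁
    have hFTC := intervalIntegral.integral_eq_sub_of_hasDerivAt hG hint
    rw [intervalIntegral.integral_const_mul] at hFTC
    -- (F t₁)⁻¹ = (F t₀)⁻¹ + 2 c I
    have hFt₀pos : 0 < F t₀ := by
      exact lt_of_lt_of_le (by positivity) (hFlb t₀ ⟨le_refl _, le_of_lt ht⟩)
    have hFt₁pos : 0 < F t₁ := lt_of_lt_of_le (by positivity) hcon
    have h1 : (1 : ℝ) / γ ^ 2 ≤ 2 * c * I := by
      rw [div_le_iff₀ (by positivity)] at hc ⊢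
      nlinarith
    have h2 : (F t₁)⁻¹ ≤ 1 / γ ^ 2 := by
      rw [inv_eq_one_div]
      apply one_div_le_one_div_of_le (by positivity) hcon
    have h3 : (F t₀)⁻¹ > 0 := by positivity
    rw [← hI] at hFTC
    nlinarith
  intro t htt
  have hFle : F t ≤ F t₁ :=
    hanti (Set.mem_Ici.mpr (le_of_lt ht)) (Set.mem_Ici.mpr (le_trans (le_of_lt ht) htt)) htt
  have : |y t - b| ^ 2 < γ ^ 2 := by rw [sq_abs]; exact lt_of_le_of_lt hFle hkey
  exact lt_of_pow_lt_pow_left₀ 2 (le_of_lt hγ) this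
end

section
/- Let b ∈ ℝ, γ > 0, t₀ < t₁, φ : ℝ → ℝ continuous with φ ≥ 0 on [t₀,∞) and ∫_{t₀}^{t₁} φ > 0, and c ≥ 1/(2γ²∫_{t₀}^{t₁} φ). Let ρ, δ ≥ 0 and let b̄, E : ℝ → ℝ be measurable functions with |b̄(t) - b| ≤ ρ and |E(t)| ≤ δ for all t ≥ t₀. Then any solution z of z' = c·(b̄(t) - z)³·φ(t) + E(t) with z(t₀) = z̄₀ ∈ ℝ satisfies |z(t₁) - b| < ρ + γ + δ·(t₁ - t₀). -/
open Set intervalIntegral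

private lemma sqrt_inv_deriv_aux (c' φt s : ℝ) (hs : 0 < s) :
    -(c' * (s⁻¹) ^ 3 * φt) = -(2 * c' * φt / (2 * s)) / s ^ 2 := by
  field_simp

set_option maxHeartbeats 2000000 in
/-- One-sided version: upper bound on `z t₁ - b`. -/
lemma stmt_11_aux (b γ t₀ t₁ c ρ δ : ℝ) (hγ : 0 < γ) (ht : t₀ < t₁)
    (φ : ℝ → ℝ) (hφc : Continuous φ) (hφ0 : ∀ t, t₀ ≤ t → 0 ≤ φ t)
    (hφint : 0 < ∫ t in t₀..t₁, φ t)
    (hc : 1 / (2 * γ ^ 2 * ∫ t in t₀..t₁, φ t) ≤ c)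
    (hρ : 0 ≤ ρ) (hδ : 0 ≤ δ)
    (bbar E : ℝ → ℝ)
    (hbbar : ∀ t, t₀ ≤ t → |bbar t - b| ≤ ρ) (hE : ∀ t, t₀ ≤ t → |E t| ≤ δ)
    (z : ℝ → ℝ)
    (hz : ∀ t, t₀ ≤ t → HasDerivAt z (c * (bbar t - z t) ^ 3 * φ t + E t) t) :
    z t₁ - b < ρ + γ + δ * (t₁ - t₀) := by
  set I : ℝ := ∫ t in t₀..t₁, φ t with hIdef
  have hI : 0 < I := hφint
  have hγ2 : 0 < γ ^ 2 := by positivity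
  have hcI : 1 / γ ^ 2 ≤ 2 * c * I := by
    rw [div_le_iff₀ hγ2] at *
    have h := (div_le_iff₀ (by positivity : (0:ℝ) < 2 * γ ^ 2 * I)).mp hc
    nlinarith
  have hc0 : 0 < c := by nlinarith [one_div_pos.mpr hγ2]
  -- the shifted function u
  set u : ℝ → ℝ := fun t => z t - (b + ρ + δ * (t - t₀)) with hudef
  set K : ℝ := u t₀ with hKdef
  set β : ℝ := |K| + γ with hβdef
  have hβ : 0 < β := by positivity
  have hβγ : γ ≤ β := by
    have := abs_nonneg K
    simp only [hβdef]; linarith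
  set c' : ℝ := c - β⁻¹ ^ 2 / (4 * I) with hc'def
  have hβinv : (0:ℝ) < β⁻¹ ^ 2 := by positivity
  have hβγinv : β⁻¹ ^ 2 ≤ (1:ℝ) / γ ^ 2 := by
    have h : β⁻¹ ≤ γ⁻¹ := inv_anti₀ hγ hβγ
    calc β⁻¹ ^ 2 ≤ γ⁻¹ ^ 2 := pow_le_pow_left₀ (by positivity) h 2
      _ = 1 / γ ^ 2 := by rw [inv_pow, one_div]
  have hc'pos : 0 < c' := by
    have : β⁻¹ ^ 2 / (4 * I) < 1 / γ ^ 2 / (2 * I) := by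
      rw [div_lt_div_iff₀ (by positivity) (by positivity)]
      nlinarith
    have h2 : 1 / γ ^ 2 / (2 * I) ≤ c := by
      rw [div_le_iff₀ (by positivity)]
      nlinarith
    simp only [hc'def]; linarith
  have hc'c : c' < c := by simp only [hc'def]; have : 0 < β⁻¹ ^ 2 / (4 * I) := by positivity
                           linarith
  have hkey : 1 / γ ^ 2 < β⁻¹ ^ 2 + 2 * c' * I := by
    have : 2 * c' * I = 2 * c * I - β⁻¹ ^ 2 / 2 := by
      simp only [hc'def]; field_simp; ring
    rw [this]; linarith
  -- the accumulated integral Φ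
  set Φ : ℝ → ℝ := fun t => ∫ s in t₀..t, φ s with hΦdef
  have hΦ : ∀ t : ℝ, HasDerivAt Φ (φ t) t := by
    intro t
    exact integral_hasDerivAt_right (hφc.intervalIntegrable _ _)
      hφc.aestronglyMeasurable.stronglyMeasurableAtFilter hφc.continuousAt
  have hΦ0 : ∀ t, t₀ ≤ t → 0 ≤ Φ t := by
    intro t ht'
    exact integral_nonneg ht' (fun s hs => hφ0 s hs.1)
  -- barrier ingredients
  set Q : ℝ → ℝ := fun t => β⁻¹ ^ 2 + 2 * c' * Φ t with hQdef
  have hQpos : ∀ t, t₀ ≤ t → 0 < Q t := by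
    intro t ht'
    have := hΦ0 t ht'
    simp only [hQdef]; nlinarith
  set A : ℝ → ℝ := fun t => (Real.sqrt (Q t))⁻¹ with hAdef
  have hApos : ∀ t, t₀ ≤ t → 0 < A t := by
    intro t ht'
    exact inv_pos.mpr (Real.sqrt_pos.mpr (hQpos t ht'))
  have hA' : ∀ t, t₀ ≤ t → HasDerivAt A (-(c' * A t ^ 3 * φ t)) t := by
    intro t ht'
    have hQt : 0 < Q t := hQpos t ht'
    have hQ' : HasDerivAt Q (2 * c' * φ t) t := ((hΦ t).const_mul (2 * c')).const_add _
    have hs : Real.sqrt (Q t) ≠ 0 := ne_of_gt (Real.sqrt_pos.mpr hQt)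
    have h1 := (hQ'.sqrt (ne_of_gt hQt)).inv hs
    have hs' : 0 < Real.sqrt (Q t) := Real.sqrt_pos.mpr hQt
    exact h1.congr_deriv (sqrt_inv_deriv_aux c' (φ t) (Real.sqrt (Q t)) hs').symm
  have hAt₀ : A t₀ = β := by
    simp only [hAdef, hQdef, hΦdef, integral_same, mul_zero, add_zero]
    rw [Real.sqrt_sq (by positivity : (0:ℝ) ≤ β⁻¹)]
    exact inv_inv β
  have hAt₁ : A t₁ < γ := by
    have hq : Q t₁ = β⁻¹ ^ 2 + 2 * c' * I := by simp [hQdef, hΦdef, hIdef]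
    have h1 : γ⁻¹ < Real.sqrt (Q t₁) := by
      rw [Real.lt_sqrt (by positivity)]
      rw [hq, inv_pow]
      calc (γ ^ 2)⁻¹ = 1 / γ ^ 2 := (one_div _).symm
        _ < _ := hkey
    have h2 : 0 < γ⁻¹ := by positivity
    simp only [hAdef]
    calc (Real.sqrt (Q t₁))⁻¹ < (γ⁻¹)⁻¹ := by
          exact inv_strictAnti₀ h2 h1
      _ = γ := inv_inv γ
  -- choose ε
  set ε : ℝ := (γ - A t₁) / (2 * (t₁ - t₀ + 1)) with hεdef
  have hΔ : 0 < t₁ - t₀ + 1 := by linarith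
  have hε : 0 < ε := by
    simp only [hεdef]
    exact div_pos (by linarith) (by linarith)
  set B : ℝ → ℝ := fun t => A t + ε * (t - t₀ + 1) with hBdef
  have hB' : ∀ t, t₀ ≤ t → HasDerivAt B (-(c' * A t ^ 3 * φ t) + ε) t := by
    intro t ht'
    have := (hA' t ht').add ((((hasDerivAt_id t).sub_const t₀).add_const 1).const_mul ε)
    exact this.congr_deriv (by ring)
  -- derivative of u
  have hu' : ∀ t, t₀ ≤ t →
      HasDerivAt u (c * (bbar t - z t) ^ 3 * φ t + E t - δ) t := by
    intro t ht'
    have h1 := (hz t ht').sub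
      ((((hasDerivAt_id t).sub_const t₀).const_mul δ).const_add (b + ρ))
    exact h1.congr_deriv (by ring)
  -- apply the fencing theorem
  have main : ∀ ⦃x⦄, x ∈ Icc t₀ t₁ → u x ≤ B x := by
    refine image_le_of_deriv_right_lt_deriv_boundary'
      (f := u) (f' := fun t => c * (bbar t - z t) ^ 3 * φ t + E t - δ)
      (B := B) (B' := fun t => -(c' * A t ^ 3 * φ t) + ε)
      (fun x hx => ((hu' x hx.1).continuousAt).continuousWithinAt)
      (fun x hx => (hu' x hx.1).hasDerivWithinAt)
      ?_ (fun x hx => ((hB' x hx.1).continuousAt).continuousWithinAt)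
      (fun x hx => (hB' x hx.1).hasDerivWithinAt) ?_
    · -- u t₀ ≤ B t₀
      show u t₀ ≤ B t₀
      have hB0 : B t₀ = β + ε := by simp [hBdef, hAt₀]
      rw [hB0, hβdef, ← hKdef]
      linarith [le_abs_self K]
    · -- the contact bound
      intro x hx hcontact
      have hx0 : t₀ ≤ x := hx.1
      have hA0 : 0 < A x := hApos x hx0
      have hw : A x < u x := by
        rw [hcontact]
        simp only [hBdef]
        nlinarith
      have hzx : A x < z x - bbar x := by
        have h1 : bbar x - b ≤ ρ := (abs_le.mp (hbbar x hx0)).2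
        have h2 : 0 ≤ δ * (x - t₀) := by nlinarith
        simp only [hudef] at hw
        linarith
      have hcube : (bbar x - z x) ^ 3 ≤ -(A x ^ 3) := by
        nlinarith [sq_nonneg (bbar x - z x + A x), sq_nonneg (bbar x - z x - A x)]
      have hφx : 0 ≤ φ x := hφ0 x hx0
      have hEx : E x ≤ δ := (abs_le.mp (hE x hx0)).2
      have h3 : c * (bbar x - z x) ^ 3 * φ x ≤ c * (-(A x ^ 3)) * φ x := by
        apply mul_le_mul_of_nonneg_right _ hφx
        exact mul_le_mul_of_nonneg_left hcube hc0.le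
      have h4 : c * (-(A x ^ 3)) * φ x ≤ -(c' * A x ^ 3 * φ x) := by
        have hm : 0 ≤ (c - c') * A x ^ 3 * φ x :=
          mul_nonneg (mul_nonneg (sub_nonneg.mpr hc'c.le) (pow_pos hA0 3).le) hφx
        nlinarith [hm]
      show c * (bbar x - z x) ^ 3 * φ x + E x - δ < -(c' * A x ^ 3 * φ x) + ε
      linarith
  -- conclude
  have hfin : u t₁ ≤ B t₁ := main (right_mem_Icc.mpr ht.le)
  have hεeq : ε * (t₁ - t₀ + 1) = (γ - A t₁) / 2 := by
    simp only [hεdef]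
    field_simp
  have : B t₁ < γ := by
    simp only [hBdef]
    rw [hεeq]
    linarith
  simp only [hudef] at hfin
  linarith

theorem stmt_11 (b γ t₀ t₁ c ρ δ : ℝ) (hγ : 0 < γ) (ht : t₀ < t₁)
    (φ : ℝ → ℝ) (hφc : Continuous φ) (hφ0 : ∀ t, t₀ ≤ t → 0 ≤ φ t)
    (hφint : 0 < ∫ t in t₀..t₁, φ t)
    (hc : 1 / (2 * γ ^ 2 * ∫ t in t₀..t₁, φ t) ≤ c)
    (hρ : 0 ≤ ρ) (hδ : 0 ≤ δ)
    (bbar E : ℝ → ℝ) (hbbarm : Measurable bbar) (hEm : Measurable E)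
    (hbbar : ∀ t, t₀ ≤ t → |bbar t - b| ≤ ρ) (hE : ∀ t, t₀ ≤ t → |E t| ≤ δ)
    (z : ℝ → ℝ)
    (hz : ∀ t, t₀ ≤ t → HasDerivAt z (c * (bbar t - z t) ^ 3 * φ t + E t) t) :
    |z t₁ - b| < ρ + γ + δ * (t₁ - t₀) := by
  have h1 : z t₁ - b < ρ + γ + δ * (t₁ - t₀) :=
    stmt_11_aux b γ t₀ t₁ c ρ δ hγ ht φ hφc hφ0 hφint hc hρ hδ bbar E hbbar hE z hz
  have h2 : (fun t => 2 * b - z t) t₁ - b < ρ + γ + δ * (t₁ - t₀) := by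
    apply stmt_11_aux b γ t₀ t₁ c ρ δ hγ ht φ hφc hφ0 hφint hc hρ hδ
      (fun t => 2 * b - bbar t) (fun t => -(E t))
    · intro t ht'
      have := hbbar t ht'
      rw [show (2 * b - bbar t - b) = -(bbar t - b) by ring, abs_neg]
      exact this
    · intro t ht'
      rw [abs_neg]; exact hE t ht'
    · intro t ht'
      have h := (hasDerivAt_const t (2 * b)).sub (hz t ht')
      exact h.congr_deriv (by ring)
  simp only at h2
  rw [abs_lt]
  constructor <;> linarith
end
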